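/- arXiv:2301.13570 — 2 statements merged into one kernel-verified Lean document; each statement's English description precedes it below -/
import Mathlib

section
/- Let n ≥ 2, let φ be a finite-order automorphism of the one-sided shift on (Fin n)^ℕ, let (A, Φ) with Φ = (α, ℓ) be a support of φ, and let N ≥ 1. Suppose t ∈ Q_A is heavy for (A, Φ, N) with divisibility constant b; let r be the orbit length of t under Φ, write t_{0,i} = α^i t for 0 ≤ i < r, and let M = m·r with m > 1 be a valid splitting length for t, i.e. M divides the orbit length under Φ of every edge of A with target t and lcm(M, b) = N. Then there exist a synchronizing automaton A' with state set Q_{A'} = Q_A ⊔ { t_{a,i} : 1 ≤ a < m, 0 ≤ i < r } and an automorphism Ψ = (α', ℓ') of the underlying digraph of A' such that: (i) π_{A'} x q = π_A x q for every (x, q) ∈ Fin n × Q_A with π_A x q not in the α-orbit of t; (ii) π_{A'}(·, t_{a,i}) = π_{A'}(·, t_{0,i}) for all 0 ≤ a < m and 0 ≤ i < r; (iii) α'^(a·r + i) t_{0,0} = t_{a,i} for all 0 ≤ a < m and 0 ≤ i < r, α'^M t_{0,0} = t_{0,0}, and (A', Ψ) is again a support of φ, i.e. F_{A',Ψ} =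 φ. -/
/-- The one-sided shift map on `(Fin n)^ℕ`: `(σ x) i = x (i+1)`. -/
def shiftMap (n : ℕ) : (ℕ → Fin n) → (ℕ → Fin n) := fun x i => x (i + 1)

/-- `b` has orbit length exactly `N` under `f`: `N` is the least `L ≥ 1` with `f^[L] b = b`. -/
def HasOrbitLen {β : Type*} (f : β → β) (b : β) (N : ℕ) : Prop :=
  IsLeast {L : ℕ | 0 < L ∧ f^[L] b = b} N

/-- An automorphism of the one-sided shift: a homeomorphism commuting with the shift. -/
def IsShiftAut (n : ℕ) (φ : (ℕ → Fin n) ≃ₜ (ℕ → Fin n)) : Prop :=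
  ⇑φ ∘ shiftMap n = shiftMap n ∘ ⇑φ

/-- `φ` has finite order. -/
def FiniteOrderAut (n : ℕ) (φ : (ℕ → Fin n) ≃ₜ (ℕ → Fin n)) : Prop :=
  ∃ m : ℕ, 0 < m ∧ (⇑φ)^[m] = id

/-- Extension of the transition function of an automaton to words (letters read in order). -/
def transStar {n : ℕ} {Q : Type*} (π : Fin n → Q → Q) : List (Fin n) → Q → Q
  | [], q => q
  | x :: w, q => transStar π w (π x q)

/-- The automaton `(Q, π)` is synchronizing at level `k` with synchronizing map `s`. -/
def SyncAtLevelWith {n : ℕ} {Q : Type*} (π : Fin n → Q → Q) (k : ℕ)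
    (s : List (Fin n) → Q) : Prop :=
  ∀ w : List (Fin n), w.length = k → ∀ q : Q, transStar π w q = s w

/-- The synchronizing map `s` at level `k` is surjective (the automaton is core). -/
def CoreAt {n : ℕ} {Q : Type*} (s : List (Fin n) → Q) (k : ℕ) : Prop :=
  ∀ q : Q, ∃ w : List (Fin n), w.length = k ∧ s w = q

/-- An automorphism of the underlying digraph of the automaton `(Q, π)`. -/
structure DigraphAut {Q : Type*} (n : ℕ) (π : Fin n → Q → Q) where
  α : Q ≃ Q
  lab : Q → Equiv.Perm (Fin n)
  compat : ∀ (x : Fin n) (q : Q), π (lab q x) (α q) = α (π x q)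

/-- Action of a digraph automorphism on the edge set `Q × Fin n`. -/
def edgeMap {Q : Type*} {n : ℕ} {π : Fin n → Q → Q} (Φ : DigraphAut n π) :
    Q × Fin n → Q × Fin n :=
  fun e => (Φ.α e.1, Φ.lab e.1 e.2)

/-- The output word map `Λ` of a digraph automorphism. -/
def outWord {Q : Type*} {n : ℕ} (π : Fin n → Q → Q) (lab : Q → Equiv.Perm (Fin n)) :
    List (Fin n) → Q → List (Fin n)
  | [], _ => []
  | x :: w, q => lab q x :: outWord π lab w (π x q)

/-- Action of a digraph automorphism on based circuits: `(q, w) ↦ (α q, Λ(w, q))`. -/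
def circMap {Q : Type*} {n : ℕ} {π : Fin n → Q → Q} (Φ : DigraphAut n π) :
    Q × List (Fin n) → Q × List (Fin n) :=
  fun c => (Φ.α c.1, outWord π Φ.lab c.2 c.1)

/-- `(q, w)` is a based circuit: `w` nonempty and `π*(w, q) = q`. -/
def IsBasedCircuit {Q : Type*} {n : ℕ} (π : Fin n → Q → Q) (c : Q × List (Fin n)) : Prop :=
  c.2 ≠ [] ∧ transStar π c.2 c.1 = c.1

/-- The sliding block code induced by an automaton synchronizing at level `k`
with synchronizing map `s` and digraph automorphism with labelling `lab`:
`(F x) i = lab q_i (x i)` where `q_i = s [x(i+k), x(i+k-1), …, x(i+1)]`. -/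
def inducedMap {Q : Type*} {n : ℕ} (k : ℕ) (s : List (Fin n) → Q)
    (lab : Q → Equiv.Perm (Fin n)) : (ℕ → Fin n) → (ℕ → Fin n) :=
  fun x i => lab (s (List.ofFn fun j : Fin k => x (i + k - (j : ℕ)))) (x i)

/-- `(A, Φ)` (with `A` synchronizing and core) is a support of the shift automorphism `φ`. -/
def IsSupport {Q : Type*} (n : ℕ) (π : Fin n → Q → Q) (Φ : DigraphAut n π)
    (φ : (ℕ → Fin n) ≃ₜ (ℕ → Fin n)) : Prop :=
  ∃ (k : ℕ) (s : List (Fin n) → Q), SyncAtLevelWith π k s ∧ CoreAt s k ∧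
    inducedMap k s Φ.lab = ⇑φ

/-- The permutation automorphism of the shift induced by a permutation of `Fin n`. -/
def permAutMap {n : ℕ} (ρ : Equiv.Perm (Fin n)) : (ℕ → Fin n) → (ℕ → Fin n) :=
  fun x i => ρ (x i)

/-- `t` is heavy for `(A, Φ, N)` with divisibility constant `b`. -/
def Heavy {Q : Type*} {n : ℕ} (π : Fin n → Q → Q) (Φ : DigraphAut n π)
    (N b : ℕ) (t : Q) : Prop :=
  b ∣ N ∧ b ≠ N ∧ (∀ r : ℕ, HasOrbitLen (⇑Φ.α) t r → r ∣ b) ∧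
  ∀ (q : Q) (x : Fin n), π x q = t →
    ∀ L : ℕ, HasOrbitLen (edgeMap Φ) (q, x) L → Nat.lcm L b = N

section AuxBasic
open Function

theorem transStar_append {n : ℕ} {Q : Type*} (π : Fin n → Q → Q) (u v : List (Fin n)) (q : Q) :
    transStar π (u ++ v) q = transStar π v (transStar π u q) := by
  induction u generalizing q with
  | nil => rfl
  | cons x u ih => simp [transStar, ih]

theorem mem_periodicPts_of_injective {β : Type*} [Finite β] {g : β → β}
    (hg : Injective g) (b : β) : b ∈ periodicPts g := by
  have : ¬ Injective (fun k : ℕ => g^[k] b) := by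
    intro h
    obtain ⟨a, c, hne, hac⟩ := Finite.exists_ne_map_eq_of_infinite (fun k : ℕ => g^[k] b)
    exact hne (h hac)
  rw [Injective] at this
  push_neg at this
  obtain ⟨a, c, hac, hne⟩ := this
  rcases Nat.lt_or_ge a c with h | h
  · refine ⟨c - a, by omega, ?_⟩
    have : g^[a] (g^[c-a] b) = g^[a] b := by
      rw [← iterate_add_apply]; rw [show a + (c - a) = c by omega]; exact hac.symm
    exact (hg.iterate a) this
  · have h' : a ≠ c := hne
    have hlt : c < a := by omega
    refine ⟨a - c, by omega, ?_⟩
    have : g^[c] (g^[a-c] b) = g^[c] b := by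
      rw [← iterate_add_apply]; rw [show c + (a - c) = a by omega]; exact hac
    exact (hg.iterate c) this

theorem iterate_eq_mod_of_iterate_eq {β : Type*} {g : β → β} {x : β} {r : ℕ}
    (h : g^[r] x = x) (j : ℕ) : g^[j] x = g^[j % r] x := by
  conv_lhs => rw [← Nat.mod_add_div j r]
  rw [iterate_add_apply, iterate_mul, iterate_fixed h]

theorem modEq_of_iterate_eq {β : Type*} {g : β → β} (hg : Injective g) {x : β}
    {a b : ℕ} (h : g^[a] x = g^[b] x) : a ≡ b [MOD minimalPeriod g x] := by
  wlog hab : a ≤ b generalizing a b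
  · exact (this h.symm (by omega)).symm
  have : g^[a] (g^[b - a] x) = g^[a] x := by
    rw [← iterate_add_apply, show a + (b - a) = b by omega]; exact h.symm
  have hper : IsPeriodicPt g (b - a) x := (hg.iterate a) this
  have := hper.minimalPeriod_dvd
  exact (Nat.modEq_iff_dvd' hab).mpr this

theorem minimalPeriod_iterate_eq {β : Type*} {g : β → β} {x : β}
    (hx : x ∈ periodicPts g) (j : ℕ) : minimalPeriod g (g^[j] x) = minimalPeriod g x := by
  obtain ⟨L, hL, hLx⟩ := hx
  have hxp : IsPeriodicPt g L x := hLx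
  have h1 : IsPeriodicPt g (minimalPeriod g x) (g^[j] x) :=
    (isPeriodicPt_minimalPeriod g x).apply_iterate j
  have hyper : g^[j] x ∈ periodicPts g := ⟨L, hL, hxp.apply_iterate j⟩
  -- x is an iterate of g^[j] x
  have hx' : g^[L * j] x = x := by
    rw [iterate_mul]; exact iterate_fixed hLx j
  have hback : g^[L * j - j] (g^[j] x) = x := by
    rw [← iterate_add_apply, show L * j - j + j = L * j by have := Nat.le_mul_of_pos_left j hL; omega]
    exact hx'
  have h2 : IsPeriodicPt g (minimalPeriod g (g^[j] x)) x := by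
    have := (isPeriodicPt_minimalPeriod g (g^[j] x)).apply_iterate (L * j - j)
    rwa [hback] at this
  rcases Nat.eq_zero_or_pos (minimalPeriod g (g^[j] x)) with h0 | hpos
  · exact absurd h0 (minimalPeriod_pos_of_mem_periodicPts hyper).ne'
  have d1 := h1.minimalPeriod_dvd
  have d2 := h2.minimalPeriod_dvd
  exact Nat.dvd_antisymm d1 d2

end AuxBasic
section AuxPsi
open Function

theorem exists_psi {β : Type*} [Finite β] {g : β → β} (hg : Injective g)
    {S : Set β} (hS : ∀ b ∈ S, g b ∈ S) {M r : ℕ} (hrpos : 0 < r) (hrM : r ∣ M)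
    (hMpos : 0 < M)
    (hMdvd : ∀ b ∈ S, M ∣ minimalPeriod g b)
    (idx : β → ℕ) (hidx : ∀ b ∈ S, idx b < r)
    (hidx_step : ∀ b ∈ S, idx (g b) = (idx b + 1) % r) :
    ∃ ψ : β → ZMod M, (∀ b ∈ S, ψ (g b) = ψ b + 1) ∧
      (∀ b ∈ S, (ψ b).val % r = idx b) := by
  haveI : NeZero M := ⟨hMpos.ne'⟩
  haveI : NeZero r := ⟨hrpos.ne'⟩
  classical
  -- setoid of orbits
  let sd : Setoid β := ⟨fun a c => ∃ j, g^[j] a = c, by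
    constructor
    · exact fun a => ⟨0, rfl⟩
    · rintro a c ⟨j, rfl⟩
      obtain ⟨L, hL, hLa⟩ := mem_periodicPts_of_injective hg a
      refine ⟨L * j - j, ?_⟩
      rw [← iterate_add_apply, show L * j - j + j = L * j by
        have := Nat.le_mul_of_pos_left j hL; omega, iterate_mul]
      exact iterate_fixed hLa j
    · rintro a c e ⟨j, rfl⟩ ⟨j', rfl⟩
      exact ⟨j' + j, iterate_add_apply g j' j a⟩⟩
  let rep : β → β := fun b => (Quotient.mk sd b).out
  have hrep : ∀ b, ∃ j, g^[j] (rep b) = b := by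
    intro b
    have : sd.r ((Quotient.mk sd b).out) b := Quotient.exact (Quotient.out_eq (Quotient.mk sd b))
    exact this
  have hrepg : ∀ b, rep (g b) = rep b := by
    intro b
    have : Quotient.mk sd (g b) = Quotient.mk sd b := (Quotient.sound (show sd.r b (g b) from ⟨1, rfl⟩)).symm
    simp only [rep, this]
  -- rep b is in S when b is
  have hSit : ∀ b ∈ S, ∀ j, g^[j] b ∈ S := by
    intro b hb j
    induction j with
    | zero => exact hb
    | succ j ih => rw [iterate_succ_apply']; exact hS _ ih
  have hrepS : ∀ b ∈ S, rep b ∈ S := by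
    intro b hb
    obtain ⟨j, hj⟩ := hrep b
    obtain ⟨L, hL, hLr⟩ := mem_periodicPts_of_injective hg (rep b)
    have h2 : g^[L * j - j] b ∈ S := hSit b hb _
    have : g^[L * j - j] b = rep b := by
      conv_lhs => rw [← hj]
      rw [← iterate_add_apply, show L * j - j + j = L * j by
        have := Nat.le_mul_of_pos_left j hL; omega, iterate_mul]
      exact iterate_fixed hLr j
    rwa [this] at h2
  let ψ₀ : β → ℕ := fun b => Nat.find (hrep b)
  have hψ₀ : ∀ b, g^[ψ₀ b] (rep b) = b := fun b => Nat.find_spec (hrep b)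
  -- increment mod M on S
  have hinc : ∀ b ∈ S, (ψ₀ (g b) : ZMod M) = (ψ₀ b : ZMod M) + 1 := by
    intro b hb
    have h1 : g^[ψ₀ (g b)] (rep b) = g b := by rw [← hrepg b]; exact hψ₀ (g b)
    have h2 : g^[ψ₀ b + 1] (rep b) = g b := by
      rw [iterate_succ_apply', hψ₀ b]
    have := modEq_of_iterate_eq hg (h1.trans h2.symm)
    have hMd : M ∣ minimalPeriod g (rep b) := hMdvd _ (hrepS b hb)
    have hmod : ψ₀ (g b) ≡ ψ₀ b + 1 [MOD M] := this.of_dvd hMd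
    have := (ZMod.natCast_eq_natCast_iff _ _ _).mpr hmod
    push_cast at this ⊢
    exact this
  -- increment mod r likewise
  have hincr : ∀ b ∈ S, (ψ₀ (g b) : ZMod r) = (ψ₀ b : ZMod r) + 1 := by
    intro b hb
    have h1 : g^[ψ₀ (g b)] (rep b) = g b := by rw [← hrepg b]; exact hψ₀ (g b)
    have h2 : g^[ψ₀ b + 1] (rep b) = g b := by
      rw [iterate_succ_apply', hψ₀ b]
    have := modEq_of_iterate_eq hg (h1.trans h2.symm)
    have hMd : r ∣ minimalPeriod g (rep b) := hrM.trans (hMdvd _ (hrepS b hb))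
    have hmod : ψ₀ (g b) ≡ ψ₀ b + 1 [MOD r] := this.of_dvd hMd
    have := (ZMod.natCast_eq_natCast_iff _ _ _).mpr hmod
    push_cast at this ⊢
    exact this
  let δ : β → ZMod r := fun b => (idx b : ZMod r) - (ψ₀ b : ZMod r)
  have hδstep : ∀ b ∈ S, δ (g b) = δ b := by
    intro b hb
    simp only [δ, hidx_step b hb, hincr b hb]
    have : (((idx b + 1) % r : ℕ) : ZMod r) = ((idx b + 1 : ℕ) : ZMod r) := by
      rw [ZMod.natCast_eq_natCast_iff]
      exact Nat.mod_modEq _ _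
    rw [this]
    push_cast
    ring
  have hcastval : ∀ b, ((ψ₀ b + (δ b).val : ℕ) : ZMod r) = (idx b : ZMod r) := by
    intro b
    push_cast
    have : (((δ b).val : ℕ) : ZMod r) = δ b := by
      simp [ZMod.natCast_val, ZMod.cast_id]
    rw [this]
    simp only [δ]
    ring
  refine ⟨fun b => ((ψ₀ b + (δ b).val : ℕ) : ZMod M), ?_, ?_⟩
  · intro b hb
    simp only []
    rw [hδstep b hb]
    push_cast
    rw [hinc b hb]
    ring
  · intro b hb
    simp only []
    rw [ZMod.val_natCast, Nat.mod_mod_of_dvd _ hrM]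
    have h1 : (ψ₀ b + (δ b).val) % r = ((ψ₀ b + (δ b).val : ℕ) : ZMod r).val := by
      rw [ZMod.val_natCast]
    rw [h1, hcastval b, ZMod.val_natCast, Nat.mod_eq_of_lt (hidx b hb)]

end AuxPsi
section AuxConstr
open Function

/-- Bundled data for the shadow-state construction. -/
structure ShadowCtx (n : ℕ) (Q : Type) (π : Fin n → Q → Q) where
  Φ : DigraphAut n π
  t : Q
  r : ℕ
  m : ℕ
  M : ℕ
  ψ : Q × Fin n → ZMod M
  hr : 0 < r
  hm : 1 < m
  hM : M = m * r
  hα : Φ.α^[r] t = t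
  hinj : ∀ i < r, ∀ j < r, Φ.α^[i] t = Φ.α^[j] t → i = j
  hψ_step : ∀ e : Q × Fin n, (∃ j, Φ.α^[j] t = π e.2 e.1) →
    ψ (edgeMap Φ e) = ψ e + 1
  hψ_idx : ∀ e : Q × Fin n, (∃ j, Φ.α^[j] t = π e.2 e.1) →
    Φ.α^[(ψ e).val % r] t = π e.2 e.1

namespace ShadowCtx

variable {n : ℕ} {Q : Type} {π : Fin n → Q → Q} (C : ShadowCtx n Q π)

theorem Mpos : 0 < C.M := by
  rw [C.hM]; exact Nat.mul_pos (by have := C.hm; omega) C.hr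

instance : NeZero C.M := ⟨C.Mpos.ne'⟩

/-- The extended state set. -/
abbrev St : Type := Q ⊕ (Fin (C.m - 1) × Fin C.r)

/-- Projection back to the original automaton. -/
def proj : C.St → Q := Sum.elim id (fun p => C.Φ.α^[(p.2 : ℕ)] C.t)

/-- The shadow state indexed by `v : ZMod M`, `v = a·r + i` meaning `t_{a,i}`. -/
noncomputable def shadowOf (v : ZMod C.M) : C.St :=
  if h : v.val / C.r = 0 then Sum.inl (C.Φ.α^[v.val % C.r] C.t)
  else Sum.inr (⟨v.val / C.r - 1, by
      have hv : v.val < C.M := ZMod.val_lt v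
      have : v.val / C.r < C.m := by
        rw [Nat.div_lt_iff_lt_mul C.hr]; have hM := C.hM; omega
      have h1 : 0 < v.val / C.r := Nat.pos_of_ne_zero h
      omega⟩,
    ⟨v.val % C.r, Nat.mod_lt _ C.hr⟩)

open Classical in
/-- The permutation `α'` on the extended state set. -/
noncomputable def alphaS : C.St → C.St := fun q' =>
  match q' with
  | Sum.inl q =>
      if q = C.Φ.α^[C.r - 1] C.t then
        Sum.inr (⟨0, by have := C.hm; omega⟩, ⟨0, C.hr⟩)
      else Sum.inl (C.Φ.α q)
  | Sum.inr (a, i) =>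
      if h : (i : ℕ) + 1 < C.r then Sum.inr (a, ⟨(i : ℕ) + 1, h⟩)
      else if h2 : (a : ℕ) + 1 < C.m - 1 then Sum.inr (⟨(a : ℕ) + 1, h2⟩, ⟨0, C.hr⟩)
      else Sum.inl C.t

open Classical in
/-- Explicit inverse of `alphaS`. -/
noncomputable def betaS : C.St → C.St := fun q' =>
  match q' with
  | Sum.inl q =>
      if q = C.t then
        Sum.inr (⟨C.m - 2, by have := C.hm; omega⟩, ⟨C.r - 1, by have := C.hr; omega⟩)
      else Sum.inl (C.Φ.α.symm q)
  | Sum.inr (a, i) =>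
      if h : 0 < (i : ℕ) then Sum.inr (a, ⟨(i : ℕ) - 1, by have := i.isLt; omega⟩)
      else if h2 : 0 < (a : ℕ) then
        Sum.inr (⟨(a : ℕ) - 1, by have := a.isLt; omega⟩, ⟨C.r - 1, by have := C.hr; omega⟩)
      else Sum.inl (C.Φ.α^[C.r - 1] C.t)

theorem alpha_high : C.Φ.α (C.Φ.α^[C.r - 1] C.t) = C.t := by
  calc C.Φ.α (C.Φ.α^[C.r - 1] C.t) = C.Φ.α^[(C.r - 1) + 1] C.t :=
        (iterate_succ_apply' _ _ _).symm
    _ = C.Φ.α^[C.r] C.t := by congr 1; have := C.hr; omega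
    _ = C.t := C.hα

theorem leftInv : Function.LeftInverse C.betaS C.alphaS := by
  intro q'
  match q' with
  | Sum.inl q =>
    by_cases h : q = C.Φ.α^[C.r - 1] C.t
    · simp only [alphaS, if_pos h, betaS]
      rw [dif_neg (by omega), dif_neg (by omega), h]
    · simp only [alphaS, if_neg h, betaS]
      have hne : C.Φ.α q ≠ C.t := by
        intro hc
        exact h (C.Φ.α.injective (hc.trans C.alpha_high.symm))
      rw [if_neg hne, Equiv.symm_apply_apply]
  | Sum.inr (a, i) =>
    by_cases h : (i : ℕ) + 1 < C.r
    · simp only [alphaS, dif_pos h, betaS]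
      rw [dif_pos (show 0 < ((⟨(i : ℕ) + 1, h⟩ : Fin C.r) : ℕ) by simp)]
      simp only [Sum.inr.injEq, Prod.mk.injEq, Fin.ext_iff]
      exact ⟨trivial, by simp⟩
    · simp only [alphaS, dif_neg h]
      by_cases h2 : (a : ℕ) + 1 < C.m - 1
      · simp only [dif_pos h2, betaS]
        rw [dif_neg (show ¬(0:ℕ) < 0 from by omega), dif_pos (Nat.succ_pos _)]
        simp only [Sum.inr.injEq, Prod.mk.injEq, Fin.ext_iff]
        constructor
        · simp
        · have := i.isLt; omega
      · simp only [dif_neg h2, betaS]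
        rw [if_pos trivial]
        simp only [Sum.inr.injEq, Prod.mk.injEq, Fin.ext_iff]
        constructor
        · have := a.isLt; omega
        · have := i.isLt; omega

theorem alphaS_bij [Finite Q] : Function.Bijective C.alphaS :=
  Finite.injective_iff_bijective.mp C.leftInv.injective

/-- `α'` as an equivalence. -/
noncomputable def alphaE [Finite Q] : C.St ≃ C.St :=
  Equiv.ofBijective C.alphaS C.alphaS_bij

@[simp] theorem alphaE_apply [Finite Q] (q' : C.St) : C.alphaE q' = C.alphaS q' := rfl

end ShadowCtx
end AuxConstr
namespace ShadowCtx
open Function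

variable {n : ℕ} {Q : Type} {π : Fin n → Q → Q} (C : ShadowCtx n Q π)

open Classical in
/-- Where the edge `(q, x)` points in the extended automaton. -/
noncomputable def fS (x : Fin n) (q : Q) : C.St :=
  if h : ∃ j, C.Φ.α^[j] C.t = π x q then C.shadowOf (C.ψ (q, x))
  else Sum.inl (π x q)

/-- The transition function of the extended automaton. -/
noncomputable def piS : Fin n → C.St → C.St := fun x q' =>
  match q' with
  | Sum.inl q => C.fS x q
  | Sum.inr (_, i) => C.fS x (C.Φ.α^[(i : ℕ)] C.t)

/-- The labelling of the extended digraph automorphism. -/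
noncomputable def labS : C.St → Equiv.Perm (Fin n) := fun q' => C.Φ.lab (C.proj q')

theorem piS_eq (x : Fin n) (q' : C.St) : C.piS x q' = C.fS x (C.proj q') := by
  match q' with
  | Sum.inl q => rfl
  | Sum.inr (a, i) => rfl

theorem iterate_mod_r (j : ℕ) : C.Φ.α^[j] C.t = C.Φ.α^[j % C.r] C.t :=
  iterate_eq_mod_of_iterate_eq C.hα j

theorem proj_shadowOf (v : ZMod C.M) : C.proj (C.shadowOf v) = C.Φ.α^[v.val % C.r] C.t := by
  unfold shadowOf
  split
  · rfl
  · rfl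

theorem proj_fS (x : Fin n) (q : Q) : C.proj (C.fS x q) = π x q := by
  unfold fS
  split
  · rename_i h
    rw [proj_shadowOf]
    exact C.hψ_idx (q, x) h
  · rfl

theorem proj_alphaS (q' : C.St) : C.proj (C.alphaS q') = C.Φ.α (C.proj q') := by
  match q' with
  | Sum.inl q =>
    simp only [alphaS]
    by_cases h : q = C.Φ.α^[C.r - 1] C.t
    · rw [if_pos h, h]
      simp only [proj, Sum.elim_inr, Sum.elim_inl, Fin.val_mk, iterate_zero, id_eq]
      exact C.alpha_high.symm
    · rw [if_neg h]; rfl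
  | Sum.inr (a, i) =>
    simp only [alphaS]
    by_cases h : (i : ℕ) + 1 < C.r
    · rw [dif_pos h]
      simp only [proj, Sum.elim_inr]
      exact iterate_succ_apply' _ _ _
    · rw [dif_neg h]
      have hi : (i : ℕ) = C.r - 1 := by have := i.isLt; omega
      have key : C.Φ.α (C.Φ.α^[(i : ℕ)] C.t) = C.t := by
        rw [hi]; exact C.alpha_high
      by_cases h2 : (a : ℕ) + 1 < C.m - 1
      · rw [dif_pos h2]
        simp only [proj, Sum.elim_inr, Fin.val_mk, iterate_zero, id_eq]
        exact key.symm
      · rw [dif_neg h2]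
        simp only [proj, Sum.elim_inl, Sum.elim_inr]
        exact key.symm

theorem shadowOf_low (v : ZMod C.M) (h : v.val / C.r = 0) :
    C.shadowOf v = Sum.inl (C.Φ.α^[v.val % C.r] C.t) := by
  unfold shadowOf; rw [dif_pos h]

theorem shadowOf_high (v : ZMod C.M) (h : ¬ v.val / C.r = 0)
    (h1 : v.val / C.r - 1 < C.m - 1) (h2 : v.val % C.r < C.r) :
    C.shadowOf v = Sum.inr (⟨v.val / C.r - 1, h1⟩, ⟨v.val % C.r, h2⟩) := by
  unfold shadowOf; rw [dif_neg h]

/-- Key step: `α'` advances shadow states. -/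
theorem alphaS_shadowOf (v : ZMod C.M) : C.alphaS (C.shadowOf v) = C.shadowOf (v + 1) := by
  have hM := C.hM
  have hr := C.hr
  have hm := C.hm
  obtain ⟨u, hu⟩ : ∃ u, u = v.val := ⟨_, rfl⟩
  obtain ⟨d, hd⟩ : ∃ d, d = u / C.r := ⟨_, rfl⟩
  obtain ⟨s, hs⟩ : ∃ s, s = u % C.r := ⟨_, rfl⟩
  have hv : u < C.M := hu ▸ ZMod.val_lt v
  have hvd : v.val / C.r = d := by rw [← hu]; omega
  have hvs : v.val % C.r = s := by rw [← hu]; omega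
  have hv1 : (v + 1).val = (u + 1) % C.M := by
    have h2 : ((u + 1 : ℕ) : ZMod C.M) = v + 1 := by
      push_cast
      rw [hu]
      simp [ZMod.natCast_val, ZMod.cast_id]
    rw [← h2, ZMod.val_natCast]
  have hds : u = C.r * d + s := by rw [hd, hs]; exact (Nat.div_add_mod u C.r).symm
  have hslt : s < C.r := hs ▸ Nat.mod_lt _ C.hr
  have hdm : d < C.m := by
    rw [hd, Nat.div_lt_iff_lt_mul C.hr]; omega
  have hmm : (C.m - 1) * C.r + C.r = C.m * C.r := by
    rw [← Nat.succ_mul]; congr 1; omega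
  by_cases hcase : s + 1 < C.r
  · -- no wrap in i
    have hu1 : u + 1 < C.M := by
      rcases Nat.lt_or_ge (u + 1) C.M with h | h
      · exact h
      · exfalso
        have hueq : u = (C.r - 1) + (C.m - 1) * C.r := by omega
        have : s = C.r - 1 := by
          rw [hs, hueq, Nat.add_mul_mod_self_right, Nat.mod_eq_of_lt (by omega)]
        omega
    have hval : (v + 1).val = u + 1 := by rw [hv1, Nat.mod_eq_of_lt hu1]
    have hdiv1 : (v + 1).val / C.r = d := by
      rw [hval, show u + 1 = (s + 1) + C.r * d by omega, Nat.add_mul_div_left _ _ C.hr,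
        Nat.div_eq_of_lt hcase, Nat.zero_add]
    have hdiv2 : (v + 1).val % C.r = s + 1 := by
      rw [hval, show u + 1 = (s + 1) + C.r * d by omega, Nat.add_mul_mod_self_left,
        Nat.mod_eq_of_lt hcase]
    by_cases hd0 : d = 0
    · rw [C.shadowOf_low v (by omega), C.shadowOf_low (v + 1) (by omega)]
      simp only [alphaS]
      rw [if_neg (by
        rw [hvs]
        intro hc
        have := C.hinj s hslt (C.r - 1) (by omega) hc
        omega)]
      rw [hvs, hdiv2]
      exact congrArg Sum.inl (iterate_succ_apply' C.Φ.α s C.t).symm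
    · rw [C.shadowOf_high v (by omega) (by omega) (by omega),
        C.shadowOf_high (v + 1) (by omega) (by omega) (by omega)]
      simp only [alphaS]
      rw [dif_pos (by omega)]
      simp only [Sum.inr.injEq, Prod.mk.injEq, Fin.ext_iff]
      exact ⟨by omega, by omega⟩
  · -- i wraps: s = r - 1
    have hsr : s = C.r - 1 := by omega
    by_cases hu1 : u + 1 < C.M
    · have hval : (v + 1).val = u + 1 := by rw [hv1, Nat.mod_eq_of_lt hu1]
      have hu1eq : u + 1 = C.r * (d + 1) := by
        have : C.r * (d + 1) = C.r * d + C.r := by ring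
        omega
      have hdiv1 : (v + 1).val / C.r = d + 1 := by
        rw [hval, hu1eq, Nat.mul_div_cancel_left _ C.hr]
      have hdiv2 : (v + 1).val % C.r = 0 := by
        rw [hval, hu1eq, Nat.mul_mod_right]
      have hdm1 : d + 1 < C.m := by
        by_contra hc
        have h3 : d = C.m - 1 := by omega
        have h4 : u + 1 = C.M := by
          have : C.r * d = C.r * (C.m - 1) := by rw [h3]
          have h6 : C.r * (C.m - 1) + C.r = C.r * C.m := by
            rw [← Nat.mul_succ]; congr 1; omega
          have h7 : C.M = C.r * C.m := by rw [hM, Nat.mul_comm]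
          omega
        omega
      by_cases hd0 : d = 0
      · rw [C.shadowOf_low v (by omega), C.shadowOf_high (v + 1) (by omega) (by omega) (by omega)]
        simp only [alphaS]
        rw [if_pos (by rw [hvs, hsr])]
        simp only [Sum.inr.injEq, Prod.mk.injEq, Fin.ext_iff]
        exact ⟨by omega, by omega⟩
      · rw [C.shadowOf_high v (by omega) (by omega) (by omega),
          C.shadowOf_high (v + 1) (by omega) (by omega) (by omega)]
        simp only [alphaS]
        rw [dif_neg (by omega), dif_pos (by omega)]
        simp only [Sum.inr.injEq, Prod.mk.injEq, Fin.ext_iff]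
        exact ⟨by omega, by omega⟩
    · -- u = M - 1, wrap to 0
      have huM : u = C.M - 1 := by omega
      have hval : (v + 1).val = 0 := by
        rw [hv1, show u + 1 = C.M by omega, Nat.mod_self]
      have hdm2 : d = C.m - 1 := by
        have hueq : u = (C.r - 1) + (C.m - 1) * C.r := by omega
        have h5 : u / C.r = C.m - 1 := by
          rw [hueq, Nat.add_mul_div_right _ _ C.hr, Nat.div_eq_of_lt (by omega), Nat.zero_add]
        omega
      have hd0 : ¬ d = 0 := by omega
      have h1d : (v + 1).val / C.r = 0 := by rw [hval]; exact Nat.zero_div _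
      have h1s : (v + 1).val % C.r = 0 := by rw [hval]; exact Nat.zero_mod _
      rw [C.shadowOf_high v (by omega) (by omega) (by omega), C.shadowOf_low (v + 1) h1d]
      simp only [alphaS]
      rw [dif_neg (by omega), dif_neg (by omega)]
      rw [h1s]
      simp only [iterate_zero, id_eq]

end ShadowCtx
namespace ShadowCtx
open Function

variable {n : ℕ} {Q : Type} {π : Fin n → Q → Q} (C : ShadowCtx n Q π)

theorem fS_compat (x : Fin n) (q : Q) :
    C.fS (C.Φ.lab q x) (C.Φ.α q) = C.alphaS (C.fS x q) := by
  have hcompat : π (C.Φ.lab q x) (C.Φ.α q) = C.Φ.α (π x q) := C.Φ.compat x q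
  by_cases h : ∃ j, C.Φ.α^[j] C.t = π x q
  · have h' : ∃ j, C.Φ.α^[j] C.t = π (C.Φ.lab q x) (C.Φ.α q) := by
      obtain ⟨j, hj⟩ := h
      exact ⟨j + 1, by rw [iterate_succ_apply', hj, hcompat]⟩
    unfold fS
    rw [dif_pos h', dif_pos h]
    have hstep := C.hψ_step (q, x) h
    have : (C.Φ.α q, C.Φ.lab q x) = edgeMap C.Φ (q, x) := rfl
    rw [this, hstep, ← C.alphaS_shadowOf]
  · have h' : ¬ ∃ j, C.Φ.α^[j] C.t = π (C.Φ.lab q x) (C.Φ.α q) := by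
      rintro ⟨j, hj⟩
      rw [hcompat] at hj
      match j with
      | 0 =>
        apply h
        refine ⟨C.r - 1, C.Φ.α.injective ?_⟩
        rw [C.alpha_high, ← hj]
        rfl
      | j + 1 =>
        apply h
        rw [iterate_succ_apply'] at hj
        exact ⟨j, C.Φ.α.injective hj⟩
    unfold fS
    rw [dif_neg h, dif_neg h']
    simp only [alphaS]
    rw [if_neg (fun hc => h ⟨C.r - 1, hc.symm⟩), hcompat]


theorem fS_not_orbit (x : Fin n) (q : Q) (h : ¬ ∃ j, C.Φ.α^[j] C.t = π x q) :
    C.fS x q = Sum.inl (π x q) := dif_neg h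

theorem shadowOf_linear (a i : ℕ) (ha : a < C.m) (hi : i < C.r) :
    C.shadowOf ((a * C.r + i : ℕ) : ZMod C.M) =
      if h : 1 ≤ a then Sum.inr (⟨a - 1, by omega⟩, ⟨i, hi⟩)
      else Sum.inl (C.Φ.α^[i] C.t) := by
  have hM := C.hM
  have hbound : a * C.r + i < C.M := by
    have h1 : (a + 1) * C.r ≤ C.m * C.r := Nat.mul_le_mul_right _ (by omega)
    have h2 : (a + 1) * C.r = a * C.r + C.r := by ring
    omega
  have hval : ((a * C.r + i : ℕ) : ZMod C.M).val = a * C.r + i := by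
    rw [ZMod.val_natCast, Nat.mod_eq_of_lt hbound]
  have hdiv : ((a * C.r + i : ℕ) : ZMod C.M).val / C.r = a := by
    rw [hval, show a * C.r + i = i + C.r * a by ring, Nat.add_mul_div_left _ _ C.hr,
      Nat.div_eq_of_lt hi, Nat.zero_add]
  have hmod : ((a * C.r + i : ℕ) : ZMod C.M).val % C.r = i := by
    rw [hval, show a * C.r + i = i + C.r * a by ring, Nat.add_mul_mod_self_left,
      Nat.mod_eq_of_lt hi]
  by_cases h : 1 ≤ a
  · rw [dif_pos h, C.shadowOf_high _ (by omega) (by omega) (by omega)]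
    simp only [Sum.inr.injEq, Prod.mk.injEq, Fin.ext_iff]
    exact ⟨by omega, by omega⟩
  · rw [dif_neg h, C.shadowOf_low _ (by omega), hmod]

variable [Fintype Q]

/-- The extended digraph automorphism `Ψ`. -/
noncomputable def aut : DigraphAut n C.piS where
  α := C.alphaE
  lab := C.labS
  compat := by
    intro x q'
    show C.piS (C.labS q' x) (C.alphaS q') = C.alphaS (C.piS x q')
    rw [C.piS_eq, C.piS_eq, C.proj_alphaS]
    exact C.fS_compat x (C.proj q')

theorem aut_alpha_coe : ⇑(C.aut.α) = C.alphaS := rfl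

theorem proj_transStar (w : List (Fin n)) (q' : C.St) :
    C.proj (transStar C.piS w q') = transStar π w (C.proj q') := by
  induction w generalizing q' with
  | nil => rfl
  | cons x w ih =>
    show C.proj (transStar C.piS w (C.piS x q')) = transStar π w (π x (C.proj q'))
    rw [ih, C.piS_eq, C.proj_fS]

theorem alphaS_iterate (j : ℕ) :
    C.alphaS^[j] (C.shadowOf 0) = C.shadowOf ((j : ℕ) : ZMod C.M) := by
  induction j with
  | zero => simp
  | succ j ih =>
    rw [iterate_succ_apply', ih, C.alphaS_shadowOf]
    push_cast
    rfl

theorem shadowOf_zero : C.shadowOf 0 = Sum.inl C.t := by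
  rw [C.shadowOf_low 0 (by simp [ZMod.val_zero]), ZMod.val_zero]
  simp

/-- The synchronizing map of the extended automaton. -/
noncomputable def sS : List (Fin n) → C.St := fun w => transStar C.piS w (Sum.inl C.t)

theorem transStar_level {k : ℕ} {s : List (Fin n) → Q} (hsync : SyncAtLevelWith π k s)
    (w : List (Fin n)) (hw : w.length = k + 1) (q' : C.St) :
    transStar C.piS w q' = C.sS w := by
  obtain ⟨w₀, x, rfl⟩ : ∃ w₀ x, w = w₀ ++ [x] := by
    rcases List.eq_nil_or_concat w with h | ⟨w₀, x, h⟩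
    · rw [h] at hw; simp at hw
    · exact ⟨w₀, x, by rw [h, List.concat_eq_append]⟩
  have hw₀ : w₀.length = k := by simpa using hw
  show transStar C.piS (w₀ ++ [x]) q' = transStar C.piS (w₀ ++ [x]) (Sum.inl C.t)
  rw [transStar_append, transStar_append]
  have key : ∀ p' : C.St, transStar C.piS [x] p' = C.fS x (C.proj p') := fun p' => C.piS_eq x p'
  rw [key, key, C.proj_transStar, C.proj_transStar]
  rw [hsync w₀ hw₀ (C.proj q'), ← hsync w₀ hw₀ (C.proj (Sum.inl C.t))]

theorem syncS {k : ℕ} {s : List (Fin n) → Q} (hsync : SyncAtLevelWith π k s) :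
    SyncAtLevelWith C.piS (k + 1) C.sS :=
  fun w hw q' => C.transStar_level hsync w hw q'

theorem target_iterate (e : Q × Fin n) (j : ℕ) :
    π ((edgeMap C.Φ)^[j] e).2 ((edgeMap C.Φ)^[j] e).1 = C.Φ.α^[j] (π e.2 e.1) := by
  induction j with
  | zero => rfl
  | succ j ih =>
    rw [iterate_succ_apply', iterate_succ_apply', ← ih]
    exact C.Φ.compat _ _

theorem psi_iterate (e : Q × Fin n) (he : ∃ j, C.Φ.α^[j] C.t = π e.2 e.1) (j : ℕ) :
    C.ψ ((edgeMap C.Φ)^[j] e) = C.ψ e + j := by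
  induction j with
  | zero => simp
  | succ j ih =>
    rw [iterate_succ_apply']
    have hmem : ∃ j', C.Φ.α^[j'] C.t = π ((edgeMap C.Φ)^[j] e).2 ((edgeMap C.Φ)^[j] e).1 := by
      obtain ⟨j₀, hj₀⟩ := he
      refine ⟨j + j₀, ?_⟩
      rw [C.target_iterate, ← hj₀, ← iterate_add_apply]
    rw [C.hψ_step _ hmem, ih]
    push_cast
    ring

theorem exists_edge_into (k : ℕ) (s : List (Fin n) → Q) (hsync : SyncAtLevelWith π k s)
    (hcore : CoreAt s k) (hn : 0 < n) (q : Q) (hq : 0 < k ∨ q = C.t) :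
    ∃ e : Q × Fin n, π e.2 e.1 = q := by
  match k with
  | 0 =>
    have hall : ∀ p : Q, p = s [] := fun p => hsync [] rfl p
    refine ⟨(C.t, ⟨0, hn⟩), ?_⟩
    rw [hall (π ⟨0, hn⟩ C.t)]
    rcases hq with h | h
    · omega
    · rw [h, hall C.t]
  | k + 1 =>
    obtain ⟨w, hwlen, hws⟩ := hcore q
    obtain ⟨w₀, x, rfl⟩ : ∃ w₀ x, w = w₀ ++ [x] := by
      rcases List.eq_nil_or_concat w with h | ⟨w₀, x, h⟩
      · rw [h] at hwlen; simp at hwlen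
      · exact ⟨w₀, x, by rw [h, List.concat_eq_append]⟩
    refine ⟨(transStar π w₀ C.t, x), ?_⟩
    have : transStar π (w₀ ++ [x]) C.t = q := by rw [hsync _ hwlen, hws]
    rw [transStar_append] at this
    exact this

theorem exists_fS_shadow (e₀ : Q × Fin n) (he₀ : π e₀.2 e₀.1 = C.t) (v : ZMod C.M) :
    ∃ x q₀, C.fS x q₀ = C.shadowOf v := by
  have he : ∃ j, C.Φ.α^[j] C.t = π e₀.2 e₀.1 := ⟨0, he₀.symm⟩
  set e := (edgeMap C.Φ)^[(v - C.ψ e₀).val] e₀ with hedef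
  have hψe : C.ψ e = v := by
    rw [hedef, C.psi_iterate e₀ he]
    simp [ZMod.natCast_val, ZMod.cast_id]
  have hemem : ∃ j, C.Φ.α^[j] C.t = π e.2 e.1 := by
    obtain ⟨j₀, hj₀⟩ := he
    refine ⟨(v - C.ψ e₀).val + j₀, ?_⟩
    rw [hedef, C.target_iterate, ← hj₀, ← iterate_add_apply]
  refine ⟨e.2, e.1, ?_⟩
  unfold fS
  rw [dif_pos hemem]
  rw [show (e.1, e.2) = e from rfl, hψe]

theorem exists_incoming (k : ℕ) (s : List (Fin n) → Q) (hsync : SyncAtLevelWith π k s)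
    (hcore : CoreAt s k) (hn : 0 < n) (q' : C.St) : ∃ x q₀, C.fS x q₀ = q' := by
  obtain ⟨e₀, he₀⟩ := C.exists_edge_into k s hsync hcore hn C.t (Or.inr rfl)
  have hrM : C.r ≤ C.M := by
    have := C.hM; have := C.hm; have := C.hr; nlinarith
  match q' with
  | Sum.inl q =>
    by_cases h : ∃ j, C.Φ.α^[j] C.t = q
    · obtain ⟨j, hj⟩ := h
      have hsh : C.shadowOf ((j % C.r : ℕ) : ZMod C.M) = Sum.inl q := by
        have hval : (((j % C.r : ℕ)) : ZMod C.M).val = j % C.r := by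
          rw [ZMod.val_natCast, Nat.mod_eq_of_lt (by have := Nat.mod_lt j C.hr; omega)]
        rw [C.shadowOf_low _ (by rw [hval]; exact Nat.div_eq_of_lt (Nat.mod_lt j C.hr)), hval]
        rw [Nat.mod_mod_of_dvd j (dvd_refl C.r), ← C.iterate_mod_r j, hj]
      obtain ⟨x, q₀, hx⟩ := C.exists_fS_shadow e₀ he₀ ((j % C.r : ℕ) : ZMod C.M)
      exact ⟨x, q₀, by rw [hx, hsh]⟩
    · have hq : q ≠ C.t := fun hc => h ⟨0, by rw [hc]; rfl⟩
      have hk : 0 < k ∨ q = C.t := by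
        match k with
        | 0 =>
          exfalso
          have hall : ∀ p : Q, p = s [] := fun p => hsync [] rfl p
          exact hq ((hall q).trans (hall C.t).symm)
        | k + 1 => exact Or.inl (Nat.succ_pos k)
      obtain ⟨e, he⟩ := C.exists_edge_into k s hsync hcore hn q hk
      refine ⟨e.2, e.1, ?_⟩
      unfold fS
      rw [dif_neg (show ¬∃ j, C.Φ.α^[j] C.t = π e.2 e.1 by rw [he]; exact h), he]
  | Sum.inr (a, i) =>
    have hbound : ((a : ℕ) + 1) * C.r + (i : ℕ) < C.M := by
      have ha := a.isLt
      have hi := i.isLt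
      have : ((a : ℕ) + 2) * C.r ≤ C.m * C.r :=
        Nat.mul_le_mul_right _ (by omega)
      have h2 : ((a : ℕ) + 2) * C.r = ((a : ℕ) + 1) * C.r + C.r := by ring
      have := C.hM
      omega
    set v : ZMod C.M := ((((a : ℕ) + 1) * C.r + (i : ℕ) : ℕ) : ZMod C.M) with hv
    have hval : v.val = ((a : ℕ) + 1) * C.r + (i : ℕ) := by
      rw [hv, ZMod.val_natCast, Nat.mod_eq_of_lt hbound]
    have hdiv : v.val / C.r = (a : ℕ) + 1 := by
      rw [hval, show ((a : ℕ) + 1) * C.r + (i : ℕ) = (i : ℕ) + C.r * ((a : ℕ) + 1) by ring,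
        Nat.add_mul_div_left _ _ C.hr, Nat.div_eq_of_lt i.isLt, Nat.zero_add]
    have hmod : v.val % C.r = (i : ℕ) := by
      rw [hval, show ((a : ℕ) + 1) * C.r + (i : ℕ) = (i : ℕ) + C.r * ((a : ℕ) + 1) by ring,
        Nat.add_mul_mod_self_left, Nat.mod_eq_of_lt i.isLt]
    have hsh : C.shadowOf v = Sum.inr (a, i) := by
      rw [C.shadowOf_high v (by omega) (by omega) (by rw [hmod]; exact i.isLt)]
      simp only [Sum.inr.injEq, Prod.mk.injEq, Fin.ext_iff]
      exact ⟨by omega, by rw [hmod]⟩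
    obtain ⟨x, q₀, hx⟩ := C.exists_fS_shadow e₀ he₀ v
    exact ⟨x, q₀, by rw [hx, hsh]⟩

theorem coreS (k : ℕ) (s : List (Fin n) → Q) (hsync : SyncAtLevelWith π k s)
    (hcore : CoreAt s k) (hn : 0 < n) : CoreAt C.sS (k + 1) := by
  intro q'
  obtain ⟨x, q₀, hfx⟩ := C.exists_incoming k s hsync hcore hn q'
  obtain ⟨w₀, hw₀len, hw₀⟩ := hcore q₀
  refine ⟨w₀ ++ [x], by simp [hw₀len], ?_⟩
  show transStar C.piS (w₀ ++ [x]) (Sum.inl C.t) = q'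
  rw [transStar_append]
  have key : transStar C.piS [x] (transStar C.piS w₀ (Sum.inl C.t)) =
      C.fS x (C.proj (transStar C.piS w₀ (Sum.inl C.t))) := C.piS_eq x _
  rw [key, C.proj_transStar]
  show C.fS x (transStar π w₀ C.t) = q'
  rw [hsync w₀ hw₀len, hw₀, hfx]

theorem inducedS (k : ℕ) (s : List (Fin n) → Q) (hsync : SyncAtLevelWith π k s) :
    inducedMap (k + 1) C.sS C.labS = inducedMap k s C.Φ.lab := by
  funext y i
  unfold inducedMap
  have hproj : C.proj (C.sS (List.ofFn fun j : Fin (k + 1) => y (i + (k + 1) - (j : ℕ)))) =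
      s (List.ofFn fun j : Fin k => y (i + k - (j : ℕ))) := by
    show C.proj (transStar C.piS _ (Sum.inl C.t)) = _
    rw [C.proj_transStar]
    rw [List.ofFn_succ]
    show transStar π _ (π (y (i + (k + 1) - (0 : ℕ))) C.t) = _
    have htl : (List.ofFn fun j : Fin k => y (i + (k + 1) - ((j.succ : Fin (k+1)) : ℕ))) =
        (List.ofFn fun j : Fin k => y (i + k - (j : ℕ))) := by
      congr 1
      funext j
      congr 1
      have : ((j.succ : Fin (k+1)) : ℕ) = (j : ℕ) + 1 := rfl
      omega
    rw [htl]
    exact hsync _ List.length_ofFn _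
  show C.Φ.lab (C.proj (C.sS _)) _ = _
  rw [hproj]

theorem supportS (φ : (ℕ → Fin n) ≃ₜ (ℕ → Fin n)) (hn : 0 < n)
    (hsupp : IsSupport n π C.Φ φ) : IsSupport n C.piS C.aut φ := by
  obtain ⟨k, s, hsync, hcore, hind⟩ := hsupp
  exact ⟨k + 1, C.sS, C.syncS hsync, C.coreS k s hsync hcore hn,
    by rw [show C.aut.lab = C.labS from rfl, C.inducedS k s hsync]; exact hind⟩

end ShadowCtx
theorem shadow_states_lemma (n : ℕ) (hn : 2 ≤ n) (N : ℕ) (hN : 1 ≤ N)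
    (φ : (ℕ → Fin n) ≃ₜ (ℕ → Fin n)) (hφ : IsShiftAut n φ)
    (hfin : FiniteOrderAut n φ)
    (Q : Type) [Fintype Q] [Nonempty Q] (π : Fin n → Q → Q)
    (Φ : DigraphAut n π) (hsupp : IsSupport n π Φ φ)
    (t : Q) (b : ℕ) (hheavy : Heavy π Φ N b t)
    (r : ℕ) (hr : HasOrbitLen (⇑Φ.α) t r)
    (m M : ℕ) (hm : 1 < m) (hM : M = m * r)
    (hMdvd : ∀ (q : Q) (x : Fin n), π x q = t →
      ∀ L : ℕ, HasOrbitLen (edgeMap Φ) (q, x) L → M ∣ L)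
    (hlcm : Nat.lcm M b = N) :
    ∃ (Q' : Type) (_ : Fintype Q') (_ : Nonempty Q') (π' : Fin n → Q' → Q')
      (Ψ : DigraphAut n π') (emb : Q → Q') (shadow : ℕ → ℕ → Q'),
      Function.Injective emb ∧
      (∀ i : ℕ, i < r → shadow 0 i = emb ((⇑Φ.α)^[i] t)) ∧
      (∀ a : ℕ, 1 ≤ a → a < m → ∀ i : ℕ, i < r → shadow a i ∉ Set.range emb) ∧
      (∀ a : ℕ, a < m → ∀ i : ℕ, i < r → ∀ a' : ℕ, a' < m → ∀ i' : ℕ, i' < r →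
        shadow a i = shadow a' i' → a = a' ∧ i = i') ∧
      (∀ q' : Q', (∃ q : Q, emb q = q') ∨
        ∃ a : ℕ, a < m ∧ ∃ i : ℕ, i < r ∧ shadow a i = q') ∧
      (∀ (x : Fin n) (q : Q), (¬ ∃ i : ℕ, (⇑Φ.α)^[i] t = π x q) →
        π' x (emb q) = emb (π x q)) ∧
      (∀ (x : Fin n) (a : ℕ), a < m → ∀ i : ℕ, i < r →
        π' x (shadow a i) = π' x (shadow 0 i)) ∧
      (∀ a : ℕ, a < m → ∀ i : ℕ, i < r →
        (⇑Ψ.α)^[a * r + i] (shadow 0 0) = shadow a i) ∧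
      (⇑Ψ.α)^[M] (shadow 0 0) = shadow 0 0 ∧
      IsSupport n π' Ψ φ := by
  classical
  open Function in
  have hr0 : 0 < r := hr.1.1
  have hαr : (⇑Φ.α)^[r] t = t := hr.1.2
  have htper : t ∈ Function.periodicPts (⇑Φ.α) := ⟨r, hr0, hαr⟩
  have hrmin : r = Function.minimalPeriod (⇑Φ.α) t := by
    apply le_antisymm
    · exact hr.2 ⟨Function.minimalPeriod_pos_of_mem_periodicPts htper,
        Function.iterate_minimalPeriod⟩
    · exact Nat.le_of_dvd hr0 (Function.IsPeriodicPt.minimalPeriod_dvd hαr)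
  have hinj : ∀ i < r, ∀ j < r, (⇑Φ.α)^[i] t = (⇑Φ.α)^[j] t → i = j := by
    intro i hi j hj h
    exact Function.iterate_injOn_Iio_minimalPeriod (by rw [← hrmin]; exact hi)
      (by rw [← hrmin]; exact hj) h
  -- the edge map is injective
  have hg_inj : Function.Injective (edgeMap Φ) := by
    rintro ⟨q1, x1⟩ ⟨q2, x2⟩ h
    simp only [edgeMap, Prod.mk.injEq] at h
    obtain ⟨h1, h2⟩ := h
    have hq : q1 = q2 := Φ.α.injective h1
    subst hq
    exact Prod.ext rfl ((Φ.lab q1).injective h2)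
  have hper_all : ∀ e : Q × Fin n, e ∈ Function.periodicPts (edgeMap Φ) :=
    mem_periodicPts_of_injective hg_inj
  -- target of iterated edges
  have htarget : ∀ (e : Q × Fin n) (j : ℕ),
      π ((edgeMap Φ)^[j] e).2 ((edgeMap Φ)^[j] e).1 = (⇑Φ.α)^[j] (π e.2 e.1) := by
    intro e j
    induction j with
    | zero => rfl
    | succ j ih =>
      rw [Function.iterate_succ_apply', Function.iterate_succ_apply', ← ih]
      exact Φ.compat _ _
  set S : Set (Q × Fin n) := {e | ∃ j, (⇑Φ.α)^[j] t = π e.2 e.1} with hSdef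
  have hS : ∀ e ∈ S, edgeMap Φ e ∈ S := by
    rintro e ⟨j, hj⟩
    refine ⟨j + 1, ?_⟩
    have := htarget e 1
    simp only [Function.iterate_one] at this
    rw [this, Function.iterate_succ_apply', hj]
  -- index function
  set idx : Q × Fin n → ℕ := fun e => sInf {j | (⇑Φ.α)^[j] t = π e.2 e.1} % r with hidxdef
  have hα_idx : ∀ e ∈ S, (⇑Φ.α)^[idx e] t = π e.2 e.1 := by
    intro e he
    have hmem : sInf {j | (⇑Φ.α)^[j] t = π e.2 e.1} ∈ {j | (⇑Φ.α)^[j] t = π e.2 e.1} :=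
      Nat.sInf_mem he
    rw [hidxdef]
    simp only []
    rw [← iterate_eq_mod_of_iterate_eq hαr]
    exact hmem
  have hidx_lt : ∀ e ∈ S, idx e < r := fun e _ => Nat.mod_lt _ hr0
  have hidx_step : ∀ e ∈ S, idx (edgeMap Φ e) = (idx e + 1) % r := by
    intro e he
    apply hinj _ (hidx_lt _ (hS e he)) _ (Nat.mod_lt _ hr0)
    rw [hα_idx _ (hS e he)]
    have h1 : π (edgeMap Φ e).2 (edgeMap Φ e).1 = Φ.α (π e.2 e.1) := by
      have := htarget e 1
      simp only [Function.iterate_one] at this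
      exact this
    rw [h1, ← iterate_eq_mod_of_iterate_eq hαr, Function.iterate_succ_apply',
      hα_idx _ he]
  -- divisibility of minimal periods
  have Mpos : 0 < M := by rw [hM]; exact Nat.mul_pos (by omega) hr0
  have rdvd : r ∣ M := hM ▸ dvd_mul_left r m
  have hMdvd' : ∀ e ∈ S, M ∣ Function.minimalPeriod (edgeMap Φ) e := by
    intro e he
    set e' := (edgeMap Φ)^[r - idx e] e with he'def
    have hte' : π e'.2 e'.1 = t := by
      rw [he'def, htarget, ← hα_idx _ he, ← Function.iterate_add_apply,
        show r - idx e + idx e = r by have := hidx_lt e he; omega, hαr]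
    have horb : HasOrbitLen (edgeMap Φ) (e'.1, e'.2) (Function.minimalPeriod (edgeMap Φ) e') := by
      constructor
      · exact ⟨Function.minimalPeriod_pos_of_mem_periodicPts (hper_all e'),
          by rw [show (e'.1, e'.2) = e' from rfl]; exact Function.iterate_minimalPeriod⟩
      · rintro L ⟨hL0, hLe⟩
        refine Nat.le_of_dvd hL0 (Function.IsPeriodicPt.minimalPeriod_dvd ?_)
        rw [show (e'.1, e'.2) = e' from rfl] at hLe
        exact hLe
    have := hMdvd e'.1 e'.2 hte' _ horb
    rwa [he'def, minimalPeriod_iterate_eq (hper_all e)] at this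
  -- obtain the phase function
  obtain ⟨ψ, hψstep, hψidx⟩ := exists_psi hg_inj hS hr0 rdvd Mpos hMdvd' idx hidx_lt hidx_step
  -- build the context
  let C : ShadowCtx n Q π :=
    ⟨Φ, t, r, m, M, ψ, hr0, hm, hM, hαr, hinj,
      fun e he => hψstep e he,
      fun e he => by rw [hψidx e he]; exact hα_idx e he⟩
  have hCm : C.m = m := rfl
  have hCr : C.r = r := rfl
  have hCM : C.M = M := rfl
  -- the shadow naming function
  let shadow : ℕ → ℕ → C.St := fun a i =>
    if h : 1 ≤ a ∧ a - 1 < C.m - 1 ∧ i < C.r then Sum.inr (⟨a - 1, h.2.1⟩, ⟨i, h.2.2⟩)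
    else Sum.inl ((⇑Φ.α)^[i] t)
  have hshadow0 : ∀ i : ℕ, shadow 0 i = Sum.inl ((⇑Φ.α)^[i] t) := by
    intro i
    show dite _ _ _ = _
    rw [dif_neg (by omega)]
  have hshadow1 : ∀ a i (ha : 1 ≤ a) (ham : a < m) (hir : i < r),
      shadow a i = Sum.inr (⟨a - 1, by have e1 : C.m = m := rfl; omega⟩,
        (⟨i, by have e2 : C.r = r := rfl; omega⟩ : Fin C.r)) := by
    intro a i ha ham hir
    show dite _ _ _ = _
    rw [dif_pos ⟨ha, by have e1 : C.m = m := rfl; omega, by have e2 : C.r = r := rfl; omega⟩]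
  have hshadow_sh : ∀ a i, a < m → i < r →
      shadow a i = C.shadowOf ((a * r + i : ℕ) : ZMod C.M) := by
    intro a i ha hir
    rw [show ((a * r + i : ℕ) : ZMod C.M) = ((a * C.r + i : ℕ) : ZMod C.M) by rw [hCr],
      C.shadowOf_linear a i (by have e1 : C.m = m := rfl; omega)
        (by have e2 : C.r = r := rfl; omega)]
    by_cases h1 : 1 ≤ a
    · rw [dif_pos h1, hshadow1 a i h1 ha hir]
    · have ha0 : a = 0 := by omega
      rw [dif_neg h1, ha0, hshadow0]
  refine ⟨C.St, inferInstance, ⟨Sum.inl t⟩, C.piS, C.aut, Sum.inl, shadow,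
    Sum.inl_injective, ?_, ?_, ?_, ?_, ?_, ?_, ?_, ?_, ?_⟩
  · intro i _
    exact hshadow0 i
  · intro a ha ham i hir
    rw [hshadow1 a i ha ham hir]
    rintro ⟨q, hq⟩
    exact Sum.inl_ne_inr hq
  · intro a ha i hi a' ha' i' hi' heq
    by_cases h1 : 1 ≤ a <;> by_cases h2 : 1 ≤ a'
    · rw [hshadow1 a i h1 ha hi, hshadow1 a' i' h2 ha' hi'] at heq
      simp only [Sum.inr.injEq, Prod.mk.injEq, Fin.ext_iff] at heq
      omega
    · rw [hshadow1 a i h1 ha hi, show a' = 0 by omega, hshadow0] at heq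
      exact absurd heq Sum.inr_ne_inl
    · rw [show a = 0 by omega, hshadow0, hshadow1 a' i' h2 ha' hi'] at heq
      exact absurd heq Sum.inl_ne_inr
    · rw [show a = 0 by omega, show a' = 0 by omega, hshadow0, hshadow0] at heq
      have := hinj i hi i' hi' (Sum.inl_injective heq)
      omega
  · intro q'
    match q' with
    | Sum.inl q => exact Or.inl ⟨q, rfl⟩
    | Sum.inr (a, i) =>
      have ha2 : (a : ℕ) < C.m - 1 := a.isLt
      have hi2 : (i : ℕ) < C.r := i.isLt
      have e1 : C.m = m := rfl
      have e2 : C.r = r := rfl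
      refine Or.inr ⟨(a : ℕ) + 1, by omega, (i : ℕ), by omega, ?_⟩
      rw [hshadow1 ((a : ℕ) + 1) (i : ℕ) (by omega) (by omega) (by omega)]
      simp only [Sum.inr.injEq, Prod.mk.injEq, Fin.ext_iff]
      exact ⟨by simp, trivial⟩
  · intro x q hno
    show C.fS x q = Sum.inl (π x q)
    exact C.fS_not_orbit x q hno
  · intro x a ha i hir
    by_cases h1 : 1 ≤ a
    · rw [hshadow1 a i h1 ha hir, hshadow0]
      rfl
    · rw [show a = 0 by omega]
  · intro a ha i hir
    rw [show ⇑C.aut.α = C.alphaS from rfl, hshadow_sh 0 0 (by omega) hr0,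
      show (0 * r + 0 : ℕ) = 0 by omega, Nat.cast_zero,
      C.alphaS_iterate, hshadow_sh a i ha hir]
  · rw [show ⇑C.aut.α = C.alphaS from rfl, hshadow_sh 0 0 (by omega) hr0,
      show (0 * r + 0 : ℕ) = 0 by omega, Nat.cast_zero, C.alphaS_iterate]
    congr 1
    rw [← hCM, ZMod.natCast_self]
  · exact C.supportS φ (by omega) hsupp
end

section
/- Let n ≥ 2, let A be an automaton over Fin n that is synchronizing at level k with synchronizing map s and core, and let Φ = (α, ℓ) be an automorphism of the underlying digraph of A. For a state q of A let W_{k,q} denote the set of words w of length k with s w = q (the words forcing q). Then { Λ(w, p) : w ∈ W_{k,q}, p ∈ Q_A } = W_{k, α q}: the outputs under Φ of the words of length k forcing q, processed from arbitrary states, are exactly the words of length k forcing α q. -/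
lemma outWord_length {Q : Type*} {n : ℕ} (π : Fin n → Q → Q) (lab : Q → Equiv.Perm (Fin n)) :
    ∀ (w : List (Fin n)) (p : Q), (outWord π lab w p).length = w.length := by
  intro w
  induction w with
  | nil => intro p; rfl
  | cons x w ih => intro p; simp [outWord, ih]

lemma outWord_trans {Q : Type*} {n : ℕ} {π : Fin n → Q → Q} (Φ : DigraphAut n π) :
    ∀ (w : List (Fin n)) (p : Q),
      transStar π (outWord π Φ.lab w p) (Φ.α p) = Φ.α (transStar π w p) := by
  intro w
  induction w with
  | nil => intro p; rfl
  | cons x w ih =>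
    intro p
    simp only [outWord, transStar, Φ.compat, ih]

lemma outWord_inv {Q : Type*} {n : ℕ} {π : Fin n → Q → Q} (Φ : DigraphAut n π) :
    ∀ (w : List (Fin n)) (p : Q),
      outWord π Φ.lab
        (outWord π (fun q => (Φ.lab (Φ.α.symm q)).symm) w (Φ.α p)) p = w := by
  intro w
  induction w with
  | nil => intro p; rfl
  | cons x w ih =>
    intro p
    have hx : (fun q => (Φ.lab (Φ.α.symm q)).symm) (Φ.α p) x = (Φ.lab p).symm x := by
      simp
    have hst : π x (Φ.α p) = Φ.α (π ((Φ.lab p).symm x) p) := by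
      have := Φ.compat ((Φ.lab p).symm x) p
      simpa using this
    simp only [outWord, hx, hst]
    simp [ih]

theorem outputs_of_forcing_words (n : ℕ) (hn : 2 ≤ n)
    (Q : Type) [Fintype Q] [Nonempty Q] (π : Fin n → Q → Q)
    (k : ℕ) (s : List (Fin n) → Q)
    (hsync : SyncAtLevelWith π k s) (hcore : CoreAt s k)
    (Φ : DigraphAut n π) :
    ∀ (q : Q) (w' : List (Fin n)),
      (∃ (w : List (Fin n)) (p : Q),
        w.length = k ∧ s w = q ∧ outWord π Φ.lab w p = w') ↔
      (w'.length = k ∧ s w' = Φ.α q) := by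
  intro q w'
  constructor
  · rintro ⟨w, p, hlen, hsw, rfl⟩
    have hl : (outWord π Φ.lab w p).length = k := by rw [outWord_length]; exact hlen
    refine ⟨hl, ?_⟩
    have := outWord_trans Φ w p
    rw [hsync _ hl (Φ.α p), hsync _ hlen p, hsw] at this
    exact this
  · rintro ⟨hlen, hsw⟩
    obtain ⟨p⟩ := (inferInstance : Nonempty Q)
    refine ⟨outWord π (fun q => (Φ.lab (Φ.α.symm q)).symm) w' (Φ.α p), p, ?_, ?_,
      outWord_inv Φ w' p⟩
    · rw [outWord_length]; exact hlen
    · set w := outWord π (fun q => (Φ.lab (Φ.α.symm q)).symm) w' (Φ.α p) with hw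
      have hlw : w.length = k := by rw [hw, outWord_length]; exact hlen
      have h1 := outWord_trans Φ w p
      rw [outWord_inv Φ w' p, hsync _ hlen (Φ.α p), hsync _ hlw p, hsw] at h1
      exact Φ.α.injective h1.symm
end
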